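/- Let V be a real vector space of finite dimension r ≥ 2, and let B be a symmetric bilinear form on V of signature (1, r−1), i.e. V admits a basis e₁, …, e_r with B(eᵢ, eⱼ) = 0 for i ≠ j, B(e₁, e₁) = 1, and B(eᵢ, eᵢ) = −1 for i ≥ 2. Let g : V → V be a linear isomorphism satisfying B(g x, g y) = B(x, y) for all x, y ∈ V. Suppose a real number λ > 1 is an eigenvalue of g. Then: (i) λ is a simple root of the characteristic polynomial of g, so its eigenspace is one-dimensional; (ii) λ⁻¹ is an eigenvalue of g, and it is also a simple root of the characteristic polynomial; (iii) every complex root μ of the characteristic polynomial of g with μ ∉ {λ, λ⁻¹} satisfies |μ| = 1. -/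

import Mathlib

/-!
An eigenvector `x` of an isometry `g` with eigenvalue `a` satisfies `B(x, x) = a² B(x, x)`, and
two eigenvectors with eigenvalues `a`, `b` are orthogonal unless `ab = 1`; with a sesquilinear
form the condition reads `conj(a) b = 1`. A form of signature `(1, r−1)` has no totally isotropic
plane: if `x`, `y` are isotropic and orthogonal, then `B(e₀, y) x − B(e₀, x) y` is isotropic and
orthogonal to the positive vector `e₀`, hence zero. So the eigenspace of an eigenvalue `t` with
`t² ≠ 1` is a line, and a Jordan chain `g y = t y + x` would give two isotropic orthogonal
independent vectors, so `t` is a simple root. The eigenvalue `λ⁻¹` comes from the eigenvector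
`B(·, x)` of the transpose of `g`. Finally, a complex eigenvalue `μ` with `|μ| ≠ 1` has an
eigenvector `w` in `ℂʳ` that is isotropic and orthogonal to the real `λ`-eigenvector for the
Hermitian extension of `B`, which again has no totally isotropic plane; hence `μ = λ`.
-/

open Matrix

theorem LinearMap.charpoly_dualMap {K V : Type*} [Field K] [AddCommGroup V] [Module K V]
    [FiniteDimensional K V] (f : Module.End K V) : f.dualMap.charpoly = f.charpoly := by
  let b := Module.finBasis K V
  rw [← f.dualMap.charpoly_toMatrix b.dualBasis, ← f.charpoly_toMatrix b,
    ← charpoly_transpose (LinearMap.toMatrix b b f), ← LinearMap.toMatrix_transpose]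
  rfl

theorem Module.End.hasEigenvalue_dualMap_iff {K V : Type*} [Field K] [AddCommGroup V]
    [Module K V] [FiniteDimensional K V] (f : Module.End K V) (a : K) :
    HasEigenvalue (f.dualMap : Module.End K (Dual K V)) a ↔ f.HasEigenvalue a := by
  rw [hasEigenvalue_iff_isRoot_charpoly, hasEigenvalue_iff_isRoot_charpoly,
    LinearMap.charpoly_dualMap]

namespace LinearMap

variable {K V : Type*} [Field K] [AddCommGroup V] [Module K V] {σ : K →+* K}

theorem apply_eq_zero_of_isometry_of_apply_eq_smul (B : V →ₛₗ[σ] V →ₗ[K] K)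
    {f : Module.End K V} (hf : ∀ x y, B (f x) (f y) = B x y) {a b : K} {x y : V}
    (hx : f x = a • x) (hy : f y = b • y) (hab : σ a * b ≠ 1) : B x y = 0 := by
  have h := hf x y
  rw [hx, hy, map_smulₛₗ₂, map_smul, smul_eq_mul, smul_eq_mul, ← mul_assoc] at h
  have : (σ a * b - 1) * B x y = 0 := by linear_combination h
  exact (mul_eq_zero.mp this).resolve_left (sub_ne_zero.mpr hab)

theorem eq_zero_or_exists_eq_smul_of_isotropic (B : V →ₛₗ[σ] V →ₗ[K] K) (e₀ : V)
    (hB : ∀ z, B e₀ z = 0 → B z z = 0 → z = 0) {x y : V} (hx : B x x = 0) (hy : B y y = 0)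
    (hxy : B x y = 0) (hyx : B y x = 0) : y = 0 ∨ ∃ c : K, x = c • y := by
  have hz : B e₀ y • x - B e₀ x • y = 0 := by
    refine hB _ ?_ ?_
    · simp only [map_sub, map_smul, smul_eq_mul]
      ring
    · simp only [map_sub, map_smulₛₗ, sub_apply, smul_apply, smul_eq_mul, hx, hy, hxy, hyx]
      ring
  by_cases hb : B e₀ y = 0
  · exact .inl (hB y hb hy)
  · refine .inr ⟨(B e₀ y)⁻¹ * B e₀ x, ?_⟩
    rw [mul_smul, ← sub_eq_zero.mp hz, smul_smul, inv_mul_cancel₀ hb, one_smul]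

theorem eq_of_isometry_of_hasEigenvector (B : V →ₛₗ[σ] V →ₗ[K] K) (e₀ : V)
    (hB : ∀ z, B e₀ z = 0 → B z z = 0 → z = 0) {f : Module.End K V}
    (hf : ∀ x y, B (f x) (f y) = B x y) {a b : K} {x y : V} (hx : f.HasEigenvector a x)
    (hy : f.HasEigenvector b y) (haa : σ a * a ≠ 1) (hbb : σ b * b ≠ 1) (hab : σ a * b ≠ 1)
    (hba : σ b * a ≠ 1) : a = b := by
  have ortho := fun {s t : K} {u v : V} (hu : f u = s • u) (hv : f v = t • v) ↦
    B.apply_eq_zero_of_isometry_of_apply_eq_smul hf hu hv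
  obtain ⟨c, hc⟩ := (B.eq_zero_or_exists_eq_smul_of_isotropic e₀ hB
    (ortho hx.apply_eq_smul hx.apply_eq_smul haa) (ortho hy.apply_eq_smul hy.apply_eq_smul hbb)
    (ortho hx.apply_eq_smul hy.apply_eq_smul hab)
    (ortho hy.apply_eq_smul hx.apply_eq_smul hba)).resolve_left hy.2
  have h : (a - b) • x = 0 := by
    rw [sub_smul, ← hx.apply_eq_smul, hc, map_smul, hy.apply_eq_smul, smul_comm, sub_self]
  exact sub_eq_zero.mp ((smul_eq_zero.mp h).resolve_right hx.2)

theorem separatingRight_of_orthogonal_isotropic_eq_zero (B : V →ₛₗ[σ] V →ₗ[K] K) (e₀ : V)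
    (hB : ∀ z, B e₀ z = 0 → B z z = 0 → z = 0) : B.SeparatingRight :=
  fun y hy ↦ hB y (hy e₀) (hy y)

theorem hasEigenvalue_inv_of_isometry [FiniteDimensional K V] (B : V →ₗ[K] V →ₗ[K] K)
    (hB : B.SeparatingRight) {f : Module.End K V} (hf : ∀ x y, B (f x) (f y) = B x y) {a : K}
    (ha : a ≠ 0) (h : f.HasEigenvalue a) : f.HasEigenvalue a⁻¹ := by
  obtain ⟨v, hv⟩ := h.exists_hasEigenvector
  rw [← Module.End.hasEigenvalue_dualMap_iff]
  refine Module.End.hasEigenvalue_of_hasEigenvector (x := B.flip v) ⟨?_, ?_⟩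
  · refine Module.End.mem_eigenspace_iff.mpr (LinearMap.ext fun w ↦ ?_)
    have h := hf w v
    rw [hv.apply_eq_smul, map_smul, smul_eq_mul] at h
    simp [← h, ha]
  · exact fun h0 ↦ hv.2 (hB v fun x ↦ by simpa using LinearMap.congr_fun h0 x)

section Eigenspace

variable (B : V →ₗ[K] V →ₗ[K] K) (e₀ : V) (hB : ∀ z, B e₀ z = 0 → B z z = 0 → z = 0)
  {f : Module.End K V} (hf : ∀ x y, B (f x) (f y) = B x y)
include hB hf

theorem apply_sub_smul_eq_zero_of_isometry {t : K} (ht : t * t ≠ 1) {y : V}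
    (hy : f (f y - t • y) = t • (f y - t • y)) : f y - t • y = 0 := by
  set x := f y - t • y
  have hfy : f y = t • y + x := by simp [x]
  have cancel : ∀ b : K, (t * t - 1) * b = 0 → b = 0 := fun b hb ↦
    (mul_eq_zero.mp hb).resolve_left (sub_ne_zero.mpr ht)
  have hxx : B x x = 0 := B.apply_eq_zero_of_isometry_of_apply_eq_smul hf hy hy ht
  have hxy : B x y = 0 := cancel _ <| by
    have h := hf x y
    simp only [hy, hfy, map_add, map_smul, smul_apply, smul_eq_mul, hxx] at h
    linear_combination h
  have hyx : B y x = 0 := cancel _ <| by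
    have h := hf y x
    simp only [hy, hfy, map_add, map_smul, add_apply, smul_apply, smul_eq_mul, hxx] at h
    linear_combination h
  have hyy : B y y = 0 := cancel _ <| by
    have h := hf y y
    simp only [hfy, map_add, map_smul, add_apply, smul_apply, smul_eq_mul, hxx, hxy, hyx] at h
    linear_combination h
  obtain hx | ⟨c, hc⟩ := B.eq_zero_or_exists_eq_smul_of_isotropic e₀ hB hyy hxx hyx hxy
  · exact hx
  · calc x = f y - t • y := rfl
      _ = c • (f x - t • x) := by rw [smul_sub, ← map_smul, smul_comm c t, ← hc]
      _ = 0 := by rw [hy, sub_self, smul_zero]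

theorem maxGenEigenspace_eq_eigenspace_of_isometry {t : K} (ht : t * t ≠ 1) :
    f.maxGenEigenspace t = f.eigenspace t := by
  set N := f - t • (1 : Module.End K V)
  have hN : ∀ y, N y = f y - t • y := fun y ↦ by simp [N]
  have ker_sq : ∀ y, N (N y) = 0 → N y = 0 := fun y hy ↦ by
    simp only [hN] at hy ⊢
    exact B.apply_sub_smul_eq_zero_of_isometry e₀ hB hf ht (sub_eq_zero.mp hy)
  have ker_pow : ∀ k y, (N ^ k) y = 0 → N y = 0 := by
    intro k
    induction k with
    | zero => intro y hy; simp_all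
    | succ k ih => intro y hy; exact ker_sq y (ih (N y) hy)
  refine le_antisymm (fun y hy ↦ ?_) Module.End.eigenspace_le_maxGenEigenspace
  obtain ⟨k, hk⟩ := (Module.End.mem_maxGenEigenspace _ _ _).mp hy
  exact Module.End.mem_eigenspace_iff.mpr (sub_eq_zero.mp (hN y ▸ ker_pow k y hk))

theorem finrank_eigenspace_eq_one_of_isometry {t : K} (ht : t * t ≠ 1)
    (h : f.HasEigenvalue t) : Module.finrank K (f.eigenspace t) = 1 := by
  obtain ⟨v, hv⟩ := h.exists_hasEigenvector
  refine (finrank_eq_one_iff_of_nonzero' (⟨v, hv.1⟩ : f.eigenspace t)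
    (by simpa using hv.2)).mpr fun ⟨w, hw⟩ ↦ ?_
  have ortho := fun {x y : V} (hx : f x = t • x) (hy : f y = t • y) ↦
    B.apply_eq_zero_of_isometry_of_apply_eq_smul hf hx hy ht
  have hv' := hv.apply_eq_smul
  have hw' := Module.End.mem_eigenspace_iff.mp hw
  obtain ⟨c, hc⟩ := (B.eq_zero_or_exists_eq_smul_of_isotropic e₀ hB (ortho hw' hw')
    (ortho hv' hv') (ortho hw' hv') (ortho hv' hw')).resolve_left hv.2
  exact ⟨c, by ext; simp [hc]⟩

theorem rootMultiplicity_charpoly_eq_one_of_isometry [FiniteDimensional K V] {t : K}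
    (ht : t * t ≠ 1) (h : f.HasEigenvalue t) : f.charpoly.rootMultiplicity t = 1 := by
  rw [← LinearMap.finrank_maxGenEigenspace_eq,
    B.maxGenEigenspace_eq_eigenspace_of_isometry e₀ hB hf ht,
    B.finrank_eigenspace_eq_one_of_isometry e₀ hB hf ht h]

end Eigenspace

end LinearMap

namespace Matrix

variable {R n : Type*} [CommRing R] [StarRing R] [Fintype n] [DecidableEq n]

theorem toLinearMapₛₗ₂'_starRingEnd_apply (A : Matrix n n R) (v w : n → R) :
    toLinearMapₛₗ₂' R (starRingEnd R) (RingHom.id R) A v w = star v ⬝ᵥ (A *ᵥ w) := by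
  simp only [toLinearMapₛₗ₂'_apply, dotProduct, mulVec, Finset.mul_sum, smul_eq_mul,
    starRingEnd_apply, RingHom.id_apply, Pi.star_apply]
  exact Finset.sum_congr rfl fun _ _ ↦ Finset.sum_congr rfl fun _ _ ↦ by ring

theorem toLinearMapₛₗ₂'_starRingEnd_mulVec_mulVec {A P : Matrix n n R} (h : Pᴴ * A * P = A)
    (v w : n → R) :
    toLinearMapₛₗ₂' R (starRingEnd R) (RingHom.id R) A (P *ᵥ v) (P *ᵥ w) =
      toLinearMapₛₗ₂' R (starRingEnd R) (RingHom.id R) A v w := by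
  rw [toLinearMapₛₗ₂'_starRingEnd_apply, toLinearMapₛₗ₂'_starRingEnd_apply, star_mulVec,
    ← dotProduct_mulVec, mulVec_mulVec, mulVec_mulVec, h]

end Matrix

theorem Matrix.conjTranspose_map_ofReal_mul_mul {n : Type*} [Fintype n] {A M : Matrix n n ℝ}
    (h : Mᵀ * A * M = A) :
    (M.map (algebraMap ℝ ℂ))ᴴ * A.map (algebraMap ℝ ℂ) * M.map (algebraMap ℝ ℂ) =
      A.map (algebraMap ℝ ℂ) := by
  rw [← conjTranspose_map (algebraMap ℝ ℂ) fun _ ↦ by simp, conjTranspose_eq_transpose_of_trivial,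
    ← Matrix.map_mul, ← Matrix.map_mul, h]

theorem eq_zero_of_sum_mul_eq_zero_of_neg {n : Type*} [Fintype n] {a d : n → ℝ} {i₀ : n}
    (hd : ∀ i ≠ i₀, d i < 0) (ha : ∀ i, 0 ≤ a i) (ha₀ : a i₀ = 0) (h : ∑ i, a i * d i = 0)
    (i : n) : a i = 0 := by
  have hnonpos : ∀ j ∈ Finset.univ, a j * d j ≤ 0 := fun j _ ↦ by
    rcases eq_or_ne j i₀ with rfl | hj
    · simp [ha₀]
    · exact mul_nonpos_of_nonneg_of_nonpos (ha j) (hd j hj).le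
  rcases eq_or_ne i i₀ with rfl | hi
  · exact ha₀
  · exact (mul_eq_zero.mp ((Finset.sum_eq_zero_iff_of_nonpos hnonpos).mp h i
      (Finset.mem_univ i))).resolve_right (hd i hi).ne

theorem LinearMap.apply_eq_sum_of_isOrthoᵢ {R M ι : Type*} [CommSemiring R] [AddCommMonoid M]
    [Module R M] [Fintype ι] (B : M →ₗ[R] M →ₗ[R] R) (e : Module.Basis ι R M)
    (he : B.IsOrthoᵢ e) (x y : M) :
    B x y = ∑ i, e.repr x i * e.repr y i * B (e i) (e i) := by
  classical
  rw [← LinearMap.sum_repr_mul_repr_mul e e, Finsupp.sum_fintype _ _ (by simp)]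
  refine Finset.sum_congr rfl fun i _ ↦ ?_
  rw [Finsupp.sum_fintype _ _ (by simp), Finset.sum_eq_single i (fun j _ hji ↦ by
    simp [he hji.symm]) (by simp), smul_eq_mul, smul_eq_mul, mul_assoc]

theorem LinearMap.eq_zero_of_isOrthoᵢ_of_isotropic {V ι : Type*} [AddCommGroup V] [Module ℝ V]
    [Fintype ι] [DecidableEq ι] (B : V →ₗ[ℝ] V →ₗ[ℝ] ℝ) (e : Module.Basis ι ℝ V)
    (he : B.IsOrthoᵢ e) {i₀ : ι} (h₀ : B (e i₀) (e i₀) ≠ 0)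
    (hneg : ∀ i ≠ i₀, B (e i) (e i) < 0) (z : V) (hz₀ : B (e i₀) z = 0) (hz : B z z = 0) :
    z = 0 := by
  rw [B.apply_eq_sum_of_isOrthoᵢ e he] at hz₀ hz
  simp only [e.repr_self, Finsupp.single_apply, ite_mul, one_mul, zero_mul,
    Finset.sum_ite_eq, Finset.mem_univ, if_true] at hz₀
  have hzi₀ : e.repr z i₀ * e.repr z i₀ = 0 := by
    rw [(mul_eq_zero.mp hz₀).resolve_right h₀, mul_zero]
  refine e.forall_coord_eq_zero_iff.mp fun i ↦ ?_
  exact mul_self_eq_zero.mp (eq_zero_of_sum_mul_eq_zero_of_neg hneg (fun i ↦ mul_self_nonneg _)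
    hzi₀ hz i)

theorem Matrix.eq_zero_of_diagonal_map_ofReal_isotropic {n : Type*} [Fintype n] [DecidableEq n]
    {d : n → ℝ} {i₀ : n} (h₀ : d i₀ ≠ 0) (hneg : ∀ i ≠ i₀, d i < 0) (z : n → ℂ)
    (hz₀ : toLinearMapₛₗ₂' ℂ (starRingEnd ℂ) (RingHom.id ℂ) ((diagonal d).map (algebraMap ℝ ℂ))
      (Pi.single i₀ 1) z = 0)
    (hz : toLinearMapₛₗ₂' ℂ (starRingEnd ℂ) (RingHom.id ℂ) ((diagonal d).map (algebraMap ℝ ℂ))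
      z z = 0) :
    z = 0 := by
  rw [diagonal_map (map_zero _), toLinearMapₛₗ₂'_starRingEnd_apply] at hz₀ hz
  simp only [dotProduct, mulVec_diagonal, Pi.star_apply] at hz₀ hz
  simp [Pi.single_apply, h₀] at hz₀
  have hsum : ∑ i, Complex.normSq (z i) * d i = 0 := by
    rw [← Complex.ofReal_inj, Complex.ofReal_zero, ← hz]
    push_cast
    refine Finset.sum_congr rfl fun i _ ↦ ?_
    rw [Complex.normSq_eq_conj_mul_self, Complex.star_def, Complex.coe_algebraMap]
    ring
  funext i
  exact Complex.normSq_eq_zero.mp (eq_zero_of_sum_mul_eq_zero_of_neg hneg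
    (fun i ↦ Complex.normSq_nonneg _) (by simp [hz₀]) hsum i)

theorem Matrix.norm_eq_one_of_isRoot_charpoly_map {n : Type*} [Fintype n] [DecidableEq n]
    {M : Matrix n n ℝ} {d : n → ℝ} {i₀ : n} (h₀ : d i₀ ≠ 0) (hneg : ∀ i ≠ i₀, d i < 0)
    (hM : Mᵀ * diagonal d * M = diagonal d) {lam : ℝ} (hlam : lam * lam ≠ 1) {x : n → ℝ}
    (hx : M *ᵥ x = lam • x) (hx₀ : x ≠ 0) {μ : ℂ} (hμ : (M.charpoly.map (algebraMap ℝ ℂ)).IsRoot μ)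
    (hμlam : μ ≠ lam) (hμinv : μ ≠ (lam : ℂ)⁻¹) : ‖μ‖ = 1 := by
  by_contra hμ₁
  set f := (M.map (algebraMap ℝ ℂ)).toLin'
  have hμf : Module.End.HasEigenvalue f μ := by
    rwa [Module.End.hasEigenvalue_iff_isRoot_charpoly, charpoly_toLin', charpoly_map]
  obtain ⟨w, hw⟩ := hμf.exists_hasEigenvector
  have hxc : Module.End.HasEigenvector f (lam : ℂ) (algebraMap ℝ ℂ ∘ x) := by
    refine ⟨Module.End.mem_eigenspace_iff.mpr (funext fun i ↦ ?_), ?_⟩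
    · change (M.map (algebraMap ℝ ℂ) *ᵥ (algebraMap ℝ ℂ ∘ x)) i = _
      rw [← RingHom.map_mulVec, hx]
      simp
    · exact fun h0 ↦ hx₀ (funext fun i ↦ by simpa using congrFun h0 i)
  set h := toLinearMapₛₗ₂' ℂ (starRingEnd ℂ) (RingHom.id ℂ) ((diagonal d).map (algebraMap ℝ ℂ))
  have hf : ∀ v w, h (f v) (f w) = h v w := fun v w ↦ by
    simp only [f, toLin'_apply]
    exact toLinearMapₛₗ₂'_starRingEnd_mulVec_mulVec (conjTranspose_map_ofReal_mul_mul hM) v w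
  refine hμlam (LinearMap.eq_of_isometry_of_hasEigenvector h (Pi.single i₀ 1)
    (eq_zero_of_diagonal_map_ofReal_isotropic h₀ hneg) hf hw hxc ?_ ?_ ?_ ?_)
  · intro h
    rw [Complex.conj_mul'] at h
    exact hμ₁ ((pow_eq_one_iff_of_nonneg (norm_nonneg μ) two_ne_zero).mp (by exact_mod_cast h))
  · simpa using (by exact_mod_cast hlam : (lam : ℂ) * lam ≠ 1)
  · intro h
    exact hμinv (eq_inv_of_mul_eq_one_left (by simpa using congrArg (starRingEnd ℂ) h))
  · intro h
    exact hμinv (eq_inv_of_mul_eq_one_right (by simpa using h))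

theorem Module.End.norm_eq_one_of_isRoot_charpoly_map_of_isometry {V ι : Type*} [AddCommGroup V]
    [Module ℝ V] [FiniteDimensional ℝ V] [Fintype ι] [DecidableEq ι] (B : V →ₗ[ℝ] V →ₗ[ℝ] ℝ)
    (e : Module.Basis ι ℝ V) (he : B.IsOrthoᵢ e) {i₀ : ι} (h₀ : B (e i₀) (e i₀) ≠ 0)
    (hneg : ∀ i ≠ i₀, B (e i) (e i) < 0) {g : Module.End ℝ V}
    (hg : ∀ x y, B (g x) (g y) = B x y) {lam : ℝ} (hlam : lam * lam ≠ 1)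
    (heig : g.HasEigenvalue lam) {μ : ℂ} (hμ : (g.charpoly.map (algebraMap ℝ ℂ)).IsRoot μ)
    (hμlam : μ ≠ lam) (hμinv : μ ≠ (lam : ℂ)⁻¹) : ‖μ‖ = 1 := by
  obtain ⟨x, hx⟩ := heig.exists_hasEigenvector
  have hD : LinearMap.toMatrix₂ e e B = diagonal fun i ↦ B (e i) (e i) := by
    ext i j
    rcases eq_or_ne i j with rfl | hij
    · simp
    · simp [hij, he hij]
  refine norm_eq_one_of_isRoot_charpoly_map (M := LinearMap.toMatrix e e g) h₀ hneg ?_ hlam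
    (x := e.repr x) ?_ (by simpa using hx.2) (by rwa [LinearMap.charpoly_toMatrix]) hμlam hμinv
  · rw [← hD, ← LinearMap.toMatrix₂_compl₁₂, show B.compl₁₂ g g = B from LinearMap.ext₂ hg]
  · rw [LinearMap.toMatrix_mulVec_repr, hx.apply_eq_smul, map_smul]
    rfl

/-- **Spectral description of a hyperbolic isometry of a lattice of signature `(1, r−1)`.**
If `g` preserves a symmetric bilinear form of signature `(1, r−1)` on a real vector space of
dimension `r ≥ 2` and has a real eigenvalue `λ > 1`, then `λ` is a simple root of the
characteristic polynomial with one-dimensional eigenspace, `λ⁻¹` is an eigenvalue and a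
simple root, and every other complex root has absolute value `1`. -/
theorem stmt7 (V : Type*) [AddCommGroup V] [Module ℝ V] [FiniteDimensional ℝ V]
    (r : ℕ) (hr : 2 ≤ r)
    (B : V →ₗ[ℝ] V →ₗ[ℝ] ℝ)
    (e : Module.Basis (Fin r) ℝ V)
    (horth : ∀ i j : Fin r, i ≠ j → B (e i) (e j) = 0)
    (hpos : B (e ⟨0, by omega⟩) (e ⟨0, by omega⟩) = 1)
    (hneg : ∀ i : Fin r, i ≠ ⟨0, by omega⟩ → B (e i) (e i) = -1)
    (g : V →ₗ[ℝ] V)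
    (hisom : ∀ x y, B (g x) (g y) = B x y)
    (lam : ℝ) (hlam : 1 < lam) (heig : Module.End.HasEigenvalue g lam) :
    (g.charpoly.rootMultiplicity lam = 1 ∧
      Module.finrank ℝ (Module.End.eigenspace g lam) = 1) ∧
    (Module.End.HasEigenvalue g lam⁻¹ ∧ g.charpoly.rootMultiplicity lam⁻¹ = 1) ∧
    (∀ μ : ℂ, (g.charpoly.map (algebraMap ℝ ℂ)).IsRoot μ →
      μ ≠ (lam : ℂ) → μ ≠ ((lam : ℂ))⁻¹ → ‖μ‖ = 1) := by
  set i₀ : Fin r := ⟨0, by omega⟩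
  have he : B.IsOrthoᵢ e := fun i j hij ↦ horth i j hij
  have h₀ : B (e i₀) (e i₀) ≠ 0 := by rw [hpos]; exact one_ne_zero
  have hneg' : ∀ i ≠ i₀, B (e i) (e i) < 0 := fun i hi ↦ by rw [hneg i hi]; exact neg_one_lt_zero
  have hB := B.eq_zero_of_isOrthoᵢ_of_isotropic e he h₀ hneg'
  have hlam₀ : lam ≠ 0 := by positivity
  have hlam₁ : lam * lam ≠ 1 := by nlinarith
  have hinv₁ : lam⁻¹ * lam⁻¹ ≠ 1 := by rw [← mul_inv, inv_ne_one]; exact hlam₁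
  have heig' := B.hasEigenvalue_inv_of_isometry
    (B.separatingRight_of_orthogonal_isotropic_eq_zero _ hB) hisom hlam₀ heig
  exact ⟨⟨B.rootMultiplicity_charpoly_eq_one_of_isometry _ hB hisom hlam₁ heig,
      B.finrank_eigenspace_eq_one_of_isometry _ hB hisom hlam₁ heig⟩,
    ⟨heig', B.rootMultiplicity_charpoly_eq_one_of_isometry _ hB hisom hinv₁ heig'⟩,
    fun μ hμ hμlam hμinv ↦ Module.End.norm_eq_one_of_isRoot_charpoly_map_of_isometry B e he h₀
      hneg' hisom hlam₁ heig hμ hμlam hμinv⟩
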